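/- arXiv:1402.6080 — 6 statements merged into one kernel-verified Lean document; each statement's English description precedes it below -/
import Mathlib

section
/- Let {a_n} be a nonnegative real sequence for which there exists n₀ ∈ ℕ such that for all n ≥ n₀, a_{n+1} ≤ (1 - μ_n) a_n + μ_n η_n, where μ_n ∈ (0,1) for all n, ∑ μ_n = ∞, and η_n ≥ 0 for all n. Then 0 ≤ limsup_{n→∞} a_n ≤ limsup_{n→∞} η_n. -/
/-!
Fix `c > limsup η`. Eventually `η n < c`, and from then on the recursion gives
`a (n + 1) - c ≤ (1 - μ n) * (a n - c)`, so `a n - c ≤ ∏ (1 - μ k) * (a N - c)`. Since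
`1 - x ≤ exp (-x)`, the product is at most `exp (-∑ μ k)`, which tends to `0` because `∑ μ k`
diverges. Hence `a` is eventually bounded and `limsup a ≤ c`.
-/

open Filter Finset Topology

theorem le_prod_Ico_mul_of_le_mul {R : Type*} [CommSemiring R] [PartialOrder R] [IsOrderedRing R]
    {b r : ℕ → R} {N : ℕ} (hr : ∀ n, N ≤ n → 0 ≤ r n)
    (hb : ∀ n, N ≤ n → b (n + 1) ≤ r n * b n) :
    ∀ n, N ≤ n → b n ≤ (∏ k ∈ Ico N n, r k) * b N := by
  intro n hn
  induction n, hn using Nat.le_induction with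
  | base => simp
  | succ n hn ih =>
    calc b (n + 1) ≤ r n * b n := hb n hn
      _ ≤ r n * ((∏ k ∈ Ico N n, r k) * b N) := mul_le_mul_of_nonneg_left ih (hr n hn)
      _ = (∏ k ∈ Ico N (n + 1), r k) * b N := by rw [prod_Ico_succ_top hn]; ring

theorem prod_Ico_one_sub_le_exp_neg_sum {μ : ℕ → ℝ} (hμ : ∀ n, μ n ≤ 1) (N n : ℕ) :
    ∏ k ∈ Ico N n, (1 - μ k) ≤ Real.exp (-∑ k ∈ Ico N n, μ k) := by
  rw [← sum_neg_distrib, Real.exp_sum]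
  exact prod_le_prod (fun k _ => sub_nonneg.2 (hμ k)) fun k _ => Real.one_sub_le_exp_neg _

theorem tendsto_prod_Ico_one_sub_of_tendsto_sum {μ : ℕ → ℝ} (hμ : ∀ n, μ n ≤ 1)
    (hdiv : Tendsto (fun n => ∑ k ∈ range n, μ k) atTop atTop) (N : ℕ) :
    Tendsto (fun n => ∏ k ∈ Ico N n, (1 - μ k)) atTop (𝓝 0) := by
  have hsum : Tendsto (fun n => ∑ k ∈ Ico N n, μ k) atTop atTop := by
    refine (tendsto_atTop_add_const_right _ (-∑ k ∈ range N, μ k) hdiv).congr' ?_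
    filter_upwards [eventually_ge_atTop N] with n hn
    rw [sum_Ico_eq_sub _ hn, sub_eq_add_neg]
  refine tendsto_of_tendsto_of_tendsto_of_le_of_le tendsto_const_nhds
    (Real.tendsto_exp_atBot.comp (tendsto_neg_atTop_atBot.comp hsum))
    (fun n => prod_nonneg fun k _ => sub_nonneg.2 (hμ k))
    (fun n => prod_Ico_one_sub_le_exp_neg_sum hμ N n)

theorem exists_tendsto_eventually_ge_of_le_one_sub_mul_add {a μ : ℕ → ℝ} {c : ℝ}
    (hμ : ∀ n, μ n ≤ 1) (hdiv : Tendsto (fun n => ∑ k ∈ range n, μ k) atTop atTop)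
    (hrec : ∀ᶠ n in atTop, a (n + 1) ≤ (1 - μ n) * a n + μ n * c) :
    ∃ v : ℕ → ℝ, Tendsto v atTop (𝓝 c) ∧ a ≤ᶠ[atTop] v := by
  obtain ⟨N, hN⟩ := eventually_atTop.1 hrec
  refine ⟨fun n => c + (∏ k ∈ Ico N n, (1 - μ k)) * (a N - c), ?_, ?_⟩
  · simpa using ((tendsto_prod_Ico_one_sub_of_tendsto_sum hμ hdiv N).mul_const (a N - c)).const_add c
  · have hcontr := le_prod_Ico_mul_of_le_mul (b := fun n => a n - c)
      (fun n _ => sub_nonneg.2 (hμ n)) fun n hn => by linear_combination hN n hn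
    filter_upwards [eventually_ge_atTop N] with n hn
    linarith [hcontr n hn]

theorem isBoundedUnder_and_limsup_le_of_le_one_sub_mul_add {a μ : ℕ → ℝ} {c : ℝ}
    (ha : ∀ n, 0 ≤ a n) (hμ : ∀ n, μ n ≤ 1)
    (hdiv : Tendsto (fun n => ∑ k ∈ range n, μ k) atTop atTop)
    (hrec : ∀ᶠ n in atTop, a (n + 1) ≤ (1 - μ n) * a n + μ n * c) :
    IsBoundedUnder (· ≤ ·) atTop a ∧ limsup a atTop ≤ c := by
  obtain ⟨v, hv, hav⟩ := exists_tendsto_eventually_ge_of_le_one_sub_mul_add hμ hdiv hrec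
  refine ⟨hv.isBoundedUnder_le.mono_le hav, ?_⟩
  calc limsup a atTop ≤ limsup v atTop :=
        limsup_le_limsup hav (isCoboundedUnder_le_of_le atTop ha) hv.isBoundedUnder_le
    _ = c := hv.limsup_eq

theorem stmt_1_general (a μ η : ℕ → ℝ) (n₀ : ℕ)
    (ha : ∀ n, 0 ≤ a n) (hμ : ∀ n, μ n ∈ Set.Ioo (0 : ℝ) 1)
    (hrec : ∀ n, n₀ ≤ n → a (n + 1) ≤ (1 - μ n) * a n + μ n * η n)
    (hdiv : Tendsto (fun n => ∑ k ∈ Finset.range n, μ k) atTop atTop)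
    (hηbdd : BddAbove (Set.range η)) :
    0 ≤ Filter.limsup a atTop ∧ Filter.limsup a atTop ≤ Filter.limsup η atTop := by
  have hμ1 : ∀ n, μ n ≤ 1 := fun n => (hμ n).2.le
  have key : ∀ c, limsup η atTop < c → IsBoundedUnder (· ≤ ·) atTop a ∧ limsup a atTop ≤ c := by
    intro c hc
    refine isBoundedUnder_and_limsup_le_of_le_one_sub_mul_add ha hμ1 hdiv ?_
    filter_upwards [eventually_lt_of_limsup_lt hc hηbdd.isBoundedUnder_of_range,
      eventually_ge_atTop n₀] with n hηn hn
    calc a (n + 1) ≤ (1 - μ n) * a n + μ n * η n := hrec n hn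
      _ ≤ (1 - μ n) * a n + μ n * c := by gcongr; exact (hμ n).1.le
  exact ⟨le_limsup_of_frequently_le (Frequently.of_forall ha) (key _ (lt_add_one _)).1,
    le_of_forall_gt_imp_ge_of_dense fun c hc => (key c hc).2⟩

theorem stmt_1 (a μ η : ℕ → ℝ) (n₀ : ℕ)
    (ha : ∀ n, 0 ≤ a n) (hμ : ∀ n, μ n ∈ Set.Ioo (0 : ℝ) 1) (hη : ∀ n, 0 ≤ η n)
    (hrec : ∀ n, n₀ ≤ n → a (n + 1) ≤ (1 - μ n) * a n + μ n * η n)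
    (hdiv : Tendsto (fun n => ∑ k ∈ Finset.range n, μ k) atTop atTop)
    (hηbdd : BddAbove (Set.range η)) :
    0 ≤ Filter.limsup a atTop ∧ Filter.limsup a atTop ≤ Filter.limsup η atTop :=
  stmt_1_general a μ η n₀ ha hμ hrec hdiv hηbdd
end

section
/- Under the hypotheses of the Karahan–Özdemir iteration for a contraction T with constant δ ∈ (0,1) and fixed point x⋆, one has for all n the one-step contraction estimate ‖p_{n+1} - x⋆‖ ≤ [1 - α_n¹(1-δ)] ‖p_n - x⋆‖. -/
/-!
Every iterate stays in `S`, and each of the three convex combinations is taken between points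
of a closed ball around `x⋆`. Since `T` maps the ball of radius `ρ = ‖p_n - x⋆‖` into the ball of
radius `δ ρ ≤ ρ`, convexity of balls gives `‖r_n - x⋆‖ ≤ ρ`, `‖q_n - x⋆‖ ≤ δ ρ` and finally
`‖p_{n+1} - x⋆‖ ≤ δ ρ`, which is at most `(1 - α_n¹ (1 - δ)) ρ`.
-/

open Metric Set

section

variable {E : Type*} [NormedAddCommGroup E] [NormedSpace ℝ E]

theorem Convex.one_sub_smul_add_smul_mem {s : Set E} (hs : Convex ℝ s) {x y : E}
    (hx : x ∈ s) (hy : y ∈ s) {a : ℝ} (ha : a ∈ Icc (0 : ℝ) 1) :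
    (1 - a) • x + a • y ∈ s :=
  hs hx hy (by linarith [ha.2]) ha.1 (by ring)

/-- One step `p_n ↦ p_{n+1}` of the Karahan–Özdemir iteration. -/
def karahanOzdemirStep (T : E → E) (a b c : ℝ) (x : E) : E :=
  (1 - a) • T x + a • T ((1 - b) • T x + b • T ((1 - c) • x + c • T x))

variable {s : Set E} {T : E → E} {a b c : ℝ}

theorem karahanOzdemirStep_mem (hs : Convex ℝ s) (hT : MapsTo T s s)
    (ha : a ∈ Icc (0 : ℝ) 1) (hb : b ∈ Icc (0 : ℝ) 1) (hc : c ∈ Icc (0 : ℝ) 1)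
    {x : E} (hx : x ∈ s) : karahanOzdemirStep T a b c x ∈ s := by
  have hr := hs.one_sub_smul_add_smul_mem hx (hT hx) hc
  have hq := hs.one_sub_smul_add_smul_mem (hT hx) (hT hr) hb
  exact hs.one_sub_smul_add_smul_mem (hT hx) (hT hq) ha

theorem norm_karahanOzdemirStep_sub_le (hs : Convex ℝ s) (hTs : MapsTo T s s)
    {δ : ℝ} (hδ : δ ∈ Icc (0 : ℝ) 1) {z : E} (hT : ∀ y ∈ s, ‖T y - z‖ ≤ δ * ‖y - z‖)
    (ha : a ∈ Icc (0 : ℝ) 1) (hb : b ∈ Icc (0 : ℝ) 1) (hc : c ∈ Icc (0 : ℝ) 1)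
    {x : E} (hx : x ∈ s) : ‖karahanOzdemirStep T a b c x - z‖ ≤ δ * ‖x - z‖ := by
  set ρ := ‖x - z‖
  have hball : closedBall z (δ * ρ) ⊆ closedBall z ρ :=
    closedBall_subset_closedBall (mul_le_of_le_one_left (norm_nonneg _) hδ.2)
  have hT_ball : ∀ y ∈ s, y ∈ closedBall z ρ → T y ∈ closedBall z (δ * ρ) := fun y hy hyρ => by
    rw [mem_closedBall_iff_norm] at hyρ ⊢
    exact (hT y hy).trans (mul_le_mul_of_nonneg_left hyρ hδ.1)
  have hx_ball : x ∈ closedBall z ρ := mem_closedBall_iff_norm.2 le_rfl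
  have hTx := hT_ball x hx hx_ball
  have hr := (convex_closedBall z ρ).one_sub_smul_add_smul_mem hx_ball (hball hTx) hc
  have hr_s := hs.one_sub_smul_add_smul_mem hx (hTs hx) hc
  have hq := (convex_closedBall z (δ * ρ)).one_sub_smul_add_smul_mem hTx
    (hT_ball _ hr_s hr) hb
  have hq_s := hs.one_sub_smul_add_smul_mem (hTs hx) (hTs hr_s) hb
  exact mem_closedBall_iff_norm.1 <| (convex_closedBall z (δ * ρ)).one_sub_smul_add_smul_mem
    hTx (hT_ball _ hq_s (hball hq)) ha

end

theorem stmt_3_general {B : Type*} [NormedAddCommGroup B] [NormedSpace ℝ B]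
    (S : Set B) (hSco : Convex ℝ S)
    (T : B → B) (hTS : ∀ x ∈ S, T x ∈ S)
    (δ : ℝ) (hδ : δ ∈ Set.Ioo (0 : ℝ) 1)
    (hT : ∀ x ∈ S, ∀ y ∈ S, ‖T x - T y‖ ≤ δ * ‖x - y‖)
    (xs : B) (hxs : xs ∈ S) (hfix : T xs = xs)
    (α1 α2 α3 : ℕ → ℝ)
    (hα1 : ∀ n, α1 n ∈ Set.Icc (0 : ℝ) 1) (hα2 : ∀ n, α2 n ∈ Set.Icc (0 : ℝ) 1)
    (hα3 : ∀ n, α3 n ∈ Set.Icc (0 : ℝ) 1)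
    (p q r : ℕ → B) (hp0 : p 0 ∈ S)
    (hp : ∀ n, p (n + 1) = (1 - α1 n) • T (p n) + α1 n • T (q n))
    (hq : ∀ n, q n = (1 - α2 n) • T (p n) + α2 n • T (r n))
    (hr : ∀ n, r n = (1 - α3 n) • p n + α3 n • T (p n)) :
    ∀ n, ‖p (n + 1) - xs‖ ≤ (1 - α1 n * (1 - δ)) * ‖p n - xs‖ := by
  have hstep : ∀ n, p (n + 1) = karahanOzdemirStep T (α1 n) (α2 n) (α3 n) (p n) := fun n => by
    rw [hp, hq, hr, karahanOzdemirStep]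
  have hpS : ∀ n, p n ∈ S := fun n => by
    induction n with
    | zero => exact hp0
    | succ n ih => exact hstep n ▸ karahanOzdemirStep_mem hSco hTS (hα1 n) (hα2 n) (hα3 n) ih
  have hT_fix : ∀ y ∈ S, ‖T y - xs‖ ≤ δ * ‖y - xs‖ := fun y hy => by
    simpa only [hfix] using hT y hy xs hxs
  intro n
  have hδ_le : δ ≤ 1 - α1 n * (1 - δ) := by nlinarith [(hα1 n).2, hδ.2]
  calc ‖p (n + 1) - xs‖ ≤ δ * ‖p n - xs‖ := hstep n ▸ norm_karahanOzdemirStep_sub_le hSco hTS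
        (Ioo_subset_Icc_self hδ) hT_fix (hα1 n) (hα2 n) (hα3 n) (hpS n)
    _ ≤ (1 - α1 n * (1 - δ)) * ‖p n - xs‖ := mul_le_mul_of_nonneg_right hδ_le (norm_nonneg _)

theorem stmt_3 {B : Type*} [NormedAddCommGroup B] [NormedSpace ℝ B] [CompleteSpace B]
    (S : Set B) (hS : S.Nonempty) (hScl : IsClosed S) (hSco : Convex ℝ S)
    (T : B → B) (hTS : ∀ x ∈ S, T x ∈ S)
    (δ : ℝ) (hδ : δ ∈ Set.Ioo (0 : ℝ) 1)
    (hT : ∀ x ∈ S, ∀ y ∈ S, ‖T x - T y‖ ≤ δ * ‖x - y‖)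
    (xs : B) (hxs : xs ∈ S) (hfix : T xs = xs)
    (α1 α2 α3 : ℕ → ℝ)
    (hα1 : ∀ n, α1 n ∈ Set.Icc (0 : ℝ) 1) (hα2 : ∀ n, α2 n ∈ Set.Icc (0 : ℝ) 1)
    (hα3 : ∀ n, α3 n ∈ Set.Icc (0 : ℝ) 1)
    (p q r : ℕ → B) (hp0 : p 0 ∈ S)
    (hp : ∀ n, p (n + 1) = (1 - α1 n) • T (p n) + α1 n • T (q n))
    (hq : ∀ n, q n = (1 - α2 n) • T (p n) + α2 n • T (r n))
    (hr : ∀ n, r n = (1 - α3 n) • p n + α3 n • T (p n)) :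
    ∀ n, ‖p (n + 1) - xs‖ ≤ (1 - α1 n * (1 - δ)) * ‖p n - xs‖ :=
  stmt_3_general S hSco T hTS δ hδ hT xs hxs hfix α1 α2 α3 hα1 hα2 hα3 p q r hp0 hp hq hr
end

section
/- Let T be a contraction with constant δ ∈ (0,1) and fixed point x⋆, and let {u_n} be the CR iteration with sequences α_n^i ∈ [0,1]. Then for all n, ‖u_{n+1} - x⋆‖ ≤ [1 - α_n¹(1-δ)]·[1 - α_n²α_n³(1-δ)]·δ·‖u_n - x⋆‖. -/
/-!
Each of the three substeps of the CR iteration is a convex combination `(1 - a) • p + a • q`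
in which `q` is at most a factor `c` farther from `x⋆` than `p`, so it shrinks the distance to
`x⋆` by `1 - a (1 - c)`. With `c = δ` for `y_n` and `u_{n+1}`, and `c = 1 - α³ (1 - δ)` for `v_n`
(whose two points are `T u_n` and `T y_n`), the three factors multiply to the claimed bound.
Convexity keeps every iterate in `S`, where the contraction estimate is available.
-/

section

variable {B : Type*} [NormedAddCommGroup B] [NormedSpace ℝ B]

theorem Convex.one_sub_smul_add_smul_mem_s8 {S : Set B} (hS : Convex ℝ S) {p q : B}
    (hp : p ∈ S) (hq : q ∈ S) {a : ℝ} (ha₀ : 0 ≤ a) (ha₁ : a ≤ 1) :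
    (1 - a) • p + a • q ∈ S :=
  hS hp hq (by linarith) ha₀ (by ring)

theorem norm_one_sub_smul_add_smul_sub_le {a : ℝ} (ha₀ : 0 ≤ a) (ha₁ : a ≤ 1) (p q z : B) :
    ‖(1 - a) • p + a • q - z‖ ≤ (1 - a) * ‖p - z‖ + a * ‖q - z‖ := by
  calc ‖(1 - a) • p + a • q - z‖ = ‖(1 - a) • (p - z) + a • (q - z)‖ := by
        congr 1; module
    _ ≤ ‖(1 - a) • (p - z)‖ + ‖a • (q - z)‖ := norm_add_le _ _
    _ = (1 - a) * ‖p - z‖ + a * ‖q - z‖ := by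
        rw [norm_smul, norm_smul, Real.norm_of_nonneg (by linarith), Real.norm_of_nonneg ha₀]

theorem norm_one_sub_smul_add_smul_sub_le_of_le {a c r : ℝ} (ha₀ : 0 ≤ a) (ha₁ : a ≤ 1)
    {p q z : B} (hp : ‖p - z‖ ≤ r) (hq : ‖q - z‖ ≤ c * r) :
    ‖(1 - a) • p + a • q - z‖ ≤ (1 - a * (1 - c)) * r := by
  calc ‖(1 - a) • p + a • q - z‖ ≤ (1 - a) * ‖p - z‖ + a * ‖q - z‖ :=
        norm_one_sub_smul_add_smul_sub_le ha₀ ha₁ p q z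
    _ ≤ (1 - a) * r + a * (c * r) := by gcongr
    _ = (1 - a * (1 - c)) * r := by ring

variable {S : Set B} {T : B → B} {δ : ℝ} {x₀ p y v : B} {a₁ a₂ a₃ : ℝ}

theorem crStep_mem (hS : Convex ℝ S) (hTS : ∀ x ∈ S, T x ∈ S)
    (ha₁ : a₁ ∈ Set.Icc (0 : ℝ) 1) (ha₂ : a₂ ∈ Set.Icc (0 : ℝ) 1) (ha₃ : a₃ ∈ Set.Icc (0 : ℝ) 1)
    (hp : p ∈ S) (hy : y = (1 - a₃) • p + a₃ • T p) (hv : v = (1 - a₂) • T p + a₂ • T y) :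
    y ∈ S ∧ v ∈ S ∧ (1 - a₁) • v + a₁ • T v ∈ S := by
  have hyS : y ∈ S := hy ▸ hS.one_sub_smul_add_smul_mem_s8 hp (hTS p hp) ha₃.1 ha₃.2
  have hvS : v ∈ S := hv ▸ hS.one_sub_smul_add_smul_mem_s8 (hTS p hp) (hTS y hyS) ha₂.1 ha₂.2
  exact ⟨hyS, hvS, hS.one_sub_smul_add_smul_mem_s8 hvS (hTS v hvS) ha₁.1 ha₁.2⟩

theorem norm_crStep_sub_le (hS : Convex ℝ S) (hTS : ∀ x ∈ S, T x ∈ S) (hδ : 0 ≤ δ)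
    (hT : ∀ x ∈ S, ‖T x - x₀‖ ≤ δ * ‖x - x₀‖)
    (ha₁ : a₁ ∈ Set.Icc (0 : ℝ) 1) (ha₂ : a₂ ∈ Set.Icc (0 : ℝ) 1) (ha₃ : a₃ ∈ Set.Icc (0 : ℝ) 1)
    (hp : p ∈ S) (hy : y = (1 - a₃) • p + a₃ • T p) (hv : v = (1 - a₂) • T p + a₂ • T y) :
    ‖(1 - a₁) • v + a₁ • T v - x₀‖ ≤
      (1 - a₁ * (1 - δ)) * (1 - a₂ * a₃ * (1 - δ)) * δ * ‖p - x₀‖ := by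
  obtain ⟨hyS, hvS, -⟩ := crStep_mem hS hTS ha₁ ha₂ ha₃ hp hy hv
  have hyb : ‖y - x₀‖ ≤ (1 - a₃ * (1 - δ)) * ‖p - x₀‖ :=
    hy ▸ norm_one_sub_smul_add_smul_sub_le_of_le ha₃.1 ha₃.2 le_rfl (hT p hp)
  have hTyb : ‖T y - x₀‖ ≤ (1 - a₃ * (1 - δ)) * (δ * ‖p - x₀‖) := by
    calc ‖T y - x₀‖ ≤ δ * ‖y - x₀‖ := hT y hyS
      _ ≤ δ * ((1 - a₃ * (1 - δ)) * ‖p - x₀‖) := by gcongr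
      _ = (1 - a₃ * (1 - δ)) * (δ * ‖p - x₀‖) := by ring
  have hvb : ‖v - x₀‖ ≤ (1 - a₂ * a₃ * (1 - δ)) * δ * ‖p - x₀‖ := by
    have := hv ▸ norm_one_sub_smul_add_smul_sub_le_of_le ha₂.1 ha₂.2 (hT p hp) hTyb
    convert this using 1; ring
  have hTvb : ‖T v - x₀‖ ≤ δ * ((1 - a₂ * a₃ * (1 - δ)) * δ * ‖p - x₀‖) :=
    (hT v hvS).trans (by gcongr)
  simpa only [mul_assoc] using
    norm_one_sub_smul_add_smul_sub_le_of_le ha₁.1 ha₁.2 hvb hTvb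

end

theorem stmt_8_general {B : Type*} [NormedAddCommGroup B] [NormedSpace ℝ B]
    (S : Set B) (hSco : Convex ℝ S)
    (T : B → B) (hTS : ∀ x ∈ S, T x ∈ S)
    (δ : ℝ) (hδ : δ ∈ Set.Ioo (0 : ℝ) 1)
    (hT : ∀ x ∈ S, ∀ y ∈ S, ‖T x - T y‖ ≤ δ * ‖x - y‖)
    (xs : B) (hxs : xs ∈ S) (hfix : T xs = xs)
    (α1 α2 α3 : ℕ → ℝ)
    (hα1 : ∀ n, α1 n ∈ Set.Icc (0 : ℝ) 1) (hα2 : ∀ n, α2 n ∈ Set.Icc (0 : ℝ) 1)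
    (hα3 : ∀ n, α3 n ∈ Set.Icc (0 : ℝ) 1)
    (u v y : ℕ → B) (hu0 : u 0 ∈ S)
    (hu : ∀ n, u (n + 1) = (1 - α1 n) • v n + α1 n • T (v n))
    (hv : ∀ n, v n = (1 - α2 n) • T (u n) + α2 n • T (y n))
    (hy : ∀ n, y n = (1 - α3 n) • u n + α3 n • T (u n)) :
    ∀ n, ‖u (n + 1) - xs‖ ≤
      (1 - α1 n * (1 - δ)) * (1 - α2 n * α3 n * (1 - δ)) * δ * ‖u n - xs‖ := by
  have hTxs : ∀ x ∈ S, ‖T x - xs‖ ≤ δ * ‖x - xs‖ := fun x hx ↦ by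
    simpa only [hfix] using hT x hx xs hxs
  have huS : ∀ n, u n ∈ S := by
    intro n
    induction n with
    | zero => exact hu0
    | succ n ih => exact hu n ▸ (crStep_mem hSco hTS (hα1 n) (hα2 n) (hα3 n) ih (hy n) (hv n)).2.2
  intro n
  rw [hu n]
  exact norm_crStep_sub_le hSco hTS hδ.1.le hTxs (hα1 n) (hα2 n) (hα3 n) (huS n) (hy n) (hv n)

theorem stmt_8 {B : Type*} [NormedAddCommGroup B] [NormedSpace ℝ B] [CompleteSpace B]
    (S : Set B) (hS : S.Nonempty) (hScl : IsClosed S) (hSco : Convex ℝ S)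
    (T : B → B) (hTS : ∀ x ∈ S, T x ∈ S)
    (δ : ℝ) (hδ : δ ∈ Set.Ioo (0 : ℝ) 1)
    (hT : ∀ x ∈ S, ∀ y ∈ S, ‖T x - T y‖ ≤ δ * ‖x - y‖)
    (xs : B) (hxs : xs ∈ S) (hfix : T xs = xs)
    (α1 α2 α3 : ℕ → ℝ)
    (hα1 : ∀ n, α1 n ∈ Set.Icc (0 : ℝ) 1) (hα2 : ∀ n, α2 n ∈ Set.Icc (0 : ℝ) 1)
    (hα3 : ∀ n, α3 n ∈ Set.Icc (0 : ℝ) 1)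
    (u v y : ℕ → B) (hu0 : u 0 ∈ S)
    (hu : ∀ n, u (n + 1) = (1 - α1 n) • v n + α1 n • T (v n))
    (hv : ∀ n, v n = (1 - α2 n) • T (u n) + α2 n • T (y n))
    (hy : ∀ n, y n = (1 - α3 n) • u n + α3 n • T (u n)) :
    ∀ n, ‖u (n + 1) - xs‖ ≤
      (1 - α1 n * (1 - δ)) * (1 - α2 n * α3 n * (1 - δ)) * δ * ‖u n - xs‖ :=
  stmt_8_general S hSco T hTS δ hδ hT xs hxs hfix α1 α2 α3 hα1 hα2 hα3 u v y hu0 hu hv hy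
end

section
/- Let δ ∈ (0,1), α₁, α₂, α₃ ∈ (0,1) and let a_n = C₁ δ^{n+1} [1-α₁(1-δ)]^{n+1} [1-α₂α₃(1-δ)]^{n+1} and b_n = C₂ δ^{n+1} [1 - α₁(1 - δ(1 - α₂α₃(1-δ)))]^{n+1} with C₁, C₂ > 0. Then a_n / b_n → 0 as n → ∞. -/
/-!
With `A = 1 - α₁(1-δ)`, `B = 1 - α₂α₃(1-δ)` and `D = 1 - α₁(1 - δB)`, the ratio is
`(C₁/C₂) (AB/D)^(n+1)`, and `D - AB = (1-α₁) α₂α₃ (1-δ) > 0` makes `AB/D` a ratio in `[0, 1)`.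
-/

open Filter Topology

theorem tendsto_const_mul_pow_div_const_mul_pow_nhds_zero {a b : ℝ} (c₁ c₂ : ℝ)
    (hab : |a| < |b|) :
    Tendsto (fun n : ℕ => c₁ * a ^ n / (c₂ * b ^ n)) atTop (𝓝 0) := by
  have hb : b ≠ 0 := abs_pos.mp ((abs_nonneg a).trans_lt hab)
  have hratio : |a / b| < 1 := by
    rwa [abs_div, div_lt_one (abs_pos.mpr hb)]
  have hlim := (tendsto_pow_atTop_nhds_zero_of_abs_lt_one hratio).const_mul (c₁ / c₂)
  rw [mul_zero] at hlim
  refine hlim.congr fun n => ?_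
  rw [div_pow, mul_div_mul_comm]

theorem one_sub_mul_one_sub_mul_add (α δ q : ℝ) :
    (1 - α * (1 - δ)) * (1 - q) + (1 - α) * q = 1 - α * (1 - δ * (1 - q)) := by
  ring

theorem stmt_10_general (δ α1 α2 α3 C1 C2 : ℝ) (hδ : δ ∈ Set.Ioo (0 : ℝ) 1)
    (h1 : α1 ∈ Set.Ioo (0 : ℝ) 1) (h2 : α2 ∈ Set.Ioo (0 : ℝ) 1)
    (h3 : α3 ∈ Set.Ioo (0 : ℝ) 1) :
    Tendsto
      (fun n : ℕ =>
        (C1 * δ ^ (n + 1) * (1 - α1 * (1 - δ)) ^ (n + 1) *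
            (1 - α2 * α3 * (1 - δ)) ^ (n + 1)) /
          (C2 * δ ^ (n + 1) *
            (1 - α1 * (1 - δ * (1 - α2 * α3 * (1 - δ)))) ^ (n + 1)))
      atTop (nhds 0) := by
  obtain ⟨hδ0, hδ1⟩ := hδ
  obtain ⟨h10, h11⟩ := h1
  obtain ⟨h20, h21⟩ := h2
  obtain ⟨h30, h31⟩ := h3
  set q := α2 * α3 * (1 - δ)
  have hq0 : 0 < q := by positivity
  have hq1 : q < 1 := by
    have : α2 * α3 < 1 := mul_lt_one_of_nonneg_of_lt_one_left h20.le h21 h31.le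
    nlinarith
  have hA : 0 < 1 - α1 * (1 - δ) := by nlinarith
  have hCR : 0 < δ * ((1 - α1 * (1 - δ)) * (1 - q)) := by
    have : 0 < 1 - q := by linarith
    positivity
  have hgap : 0 < δ * ((1 - α1) * q) := mul_pos hδ0 (mul_pos (sub_pos.2 h11) hq0)
  have hlt : |δ * ((1 - α1 * (1 - δ)) * (1 - q))| < |δ * (1 - α1 * (1 - δ * (1 - q)))| := by
    rw [← one_sub_mul_one_sub_mul_add, mul_add, abs_of_pos hCR, abs_of_pos (by linarith)]
    linarith
  refine ((tendsto_const_mul_pow_div_const_mul_pow_nhds_zero C1 C2 hlt).comp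
    (tendsto_add_atTop_nat 1)).congr fun n => ?_
  simp only [Function.comp_apply, mul_pow, mul_assoc]

theorem stmt_10 (δ α1 α2 α3 C1 C2 : ℝ) (hδ : δ ∈ Set.Ioo (0 : ℝ) 1)
    (h1 : α1 ∈ Set.Ioo (0 : ℝ) 1) (h2 : α2 ∈ Set.Ioo (0 : ℝ) 1)
    (h3 : α3 ∈ Set.Ioo (0 : ℝ) 1) (hC1 : 0 < C1) (hC2 : 0 < C2) :
    Tendsto
      (fun n : ℕ =>
        (C1 * δ ^ (n + 1) * (1 - α1 * (1 - δ)) ^ (n + 1) *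
            (1 - α2 * α3 * (1 - δ)) ^ (n + 1)) /
          (C2 * δ ^ (n + 1) *
            (1 - α1 * (1 - δ * (1 - α2 * α3 * (1 - δ)))) ^ (n + 1)))
      atTop (nhds 0) :=
  stmt_10_general δ α1 α2 α3 C1 C2 hδ h1 h2 h3
end

section
/- Let T be a contraction with constant δ ∈ (0,1) and fixed point x⋆, and suppose the sequences satisfy α₁ ≤ α_n¹ ≤ 1, α₂ ≤ α_n² ≤ 1, α₃ ≤ α_n³ ≤ 1 for some α₁, α₂, α₃ > 0. If u₀ = p₀ ∈ S, then the CR iteration error satisfies ‖u_{n+1} - x⋆‖ ≤ ‖u₀ - x⋆‖ δ^{n+1} [1-α₁(1-δ)]^{n+1} [1-α₂α₃(1-δ)]^{n+1} for all n. -/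
/-!
Each of the three updates is a convex combination of a point and an image under `T`, and
`‖T x - x⋆‖ ≤ δ ‖x - x⋆‖`, so the triangle inequality bounds `‖y_n - x⋆‖`, `‖v_n - x⋆‖` and
`‖u_{n+1} - x⋆‖` in turn. One full step thus contracts the error by
`δ (1 - α_n¹ (1 - δ)) (1 - α_n² α_n³ (1 - δ))`, which is at most the constant rate obtained from
the lower bounds `α₁, α₂, α₃`; iterating gives the geometric estimate.
-/

def crRate (δ t₁ t₂ t₃ : ℝ) : ℝ :=
  δ * (1 - t₁ * (1 - δ)) * (1 - t₂ * t₃ * (1 - δ))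

theorem one_sub_mul_one_sub_nonneg {t δ : ℝ} (ht : t ≤ 1) (hδ : δ ∈ Set.Ioo (0 : ℝ) 1) :
    0 ≤ 1 - t * (1 - δ) := by
  nlinarith [hδ.1, hδ.2]

theorem crRate_nonneg {δ t₁ t₂ t₃ : ℝ} (hδ : δ ∈ Set.Ioo (0 : ℝ) 1) (ht₁ : t₁ ≤ 1)
    (ht₂ : t₂ ≤ 1) (ht₃ : 0 ≤ t₃ ∧ t₃ ≤ 1) : 0 ≤ crRate δ t₁ t₂ t₃ :=
  mul_nonneg (mul_nonneg hδ.1.le (one_sub_mul_one_sub_nonneg ht₁ hδ))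
    (one_sub_mul_one_sub_nonneg (mul_le_one₀ ht₂ ht₃.1 ht₃.2) hδ)

theorem crRate_le_crRate {δ t₁ t₂ t₃ a₁ a₂ a₃ : ℝ} (hδ : δ ∈ Set.Ioo (0 : ℝ) 1)
    (ha₂ : 0 ≤ a₂) (ha₃ : 0 ≤ a₃) (ht₁ : a₁ ≤ t₁ ∧ t₁ ≤ 1)
    (ht₂ : a₂ ≤ t₂ ∧ t₂ ≤ 1) (ht₃ : a₃ ≤ t₃ ∧ t₃ ≤ 1) :
    crRate δ t₁ t₂ t₃ ≤ crRate δ a₁ a₂ a₃ := by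
  have hδ₀ := hδ.1
  have hδ₁ := sub_nonneg.2 hδ.2.le
  have hrate₁ := one_sub_mul_one_sub_nonneg (ht₁.1.trans ht₁.2) hδ
  have hrate₂₃ := one_sub_mul_one_sub_nonneg (mul_le_one₀ ht₂.2 (ha₃.trans ht₃.1) ht₃.2) hδ
  unfold crRate
  gcongr
  exacts [ht₁.1, ha₂.trans ht₂.1, ht₂.1, ht₃.1]

section

variable {E : Type*} [NormedAddCommGroup E] [NormedSpace ℝ E]

theorem Convex.sub_smul_add_smul_mem {S : Set E} (hS : Convex ℝ S) {x y : E} (hx : x ∈ S)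
    (hy : y ∈ S) {t : ℝ} (ht₀ : 0 ≤ t) (ht₁ : t ≤ 1) : (1 - t) • x + t • y ∈ S :=
  hS hx hy (sub_nonneg.2 ht₁) ht₀ (sub_add_cancel 1 t)

theorem norm_sub_smul_add_smul_sub_le {x y z : E} {a b t : ℝ} (ht₀ : 0 ≤ t) (ht₁ : t ≤ 1)
    (hx : ‖x - z‖ ≤ a) (hy : ‖y - z‖ ≤ b) :
    ‖(1 - t) • x + t • y - z‖ ≤ (1 - t) * a + t * b :=
  calc ‖(1 - t) • x + t • y - z‖ = ‖(1 - t) • (x - z) + t • (y - z)‖ := by congr 1; module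
    _ ≤ ‖(1 - t) • (x - z)‖ + ‖t • (y - z)‖ := norm_add_le _ _
    _ = (1 - t) * ‖x - z‖ + t * ‖y - z‖ := by
      rw [norm_smul, norm_smul, Real.norm_of_nonneg (sub_nonneg.2 ht₁), Real.norm_of_nonneg ht₀]
    _ ≤ (1 - t) * a + t * b := by gcongr

theorem norm_sub_smul_add_smul_self_sub_le {x Tx p : E} {δ t : ℝ} (ht₀ : 0 ≤ t) (ht₁ : t ≤ 1)
    (hT : ‖Tx - p‖ ≤ δ * ‖x - p‖) :
    ‖(1 - t) • x + t • Tx - p‖ ≤ (1 - t * (1 - δ)) * ‖x - p‖ :=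
  (norm_sub_smul_add_smul_sub_le ht₀ ht₁ le_rfl hT).trans_eq (by ring)

variable {S : Set E} {T : E → E} {δ : ℝ} {p : E}

theorem crStep_mem_and_norm_sub_le (hSco : Convex ℝ S) (hTS : ∀ x ∈ S, T x ∈ S)
    (hT : ∀ x ∈ S, ∀ y ∈ S, ‖T x - T y‖ ≤ δ * ‖x - y‖) (hδ : 0 ≤ δ) (hp : p ∈ S)
    (hfix : T p = p) {t₁ t₂ t₃ : ℝ} (ht₁ : 0 ≤ t₁ ∧ t₁ ≤ 1) (ht₂ : 0 ≤ t₂ ∧ t₂ ≤ 1)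
    (ht₃ : 0 ≤ t₃ ∧ t₃ ≤ 1)
    {u y v w : E} (hu : u ∈ S) (hy : y = (1 - t₃) • u + t₃ • T u)
    (hv : v = (1 - t₂) • T u + t₂ • T y) (hw : w = (1 - t₁) • v + t₁ • T v) :
    w ∈ S ∧ ‖w - p‖ ≤ crRate δ t₁ t₂ t₃ * ‖u - p‖ := by
  have hTp : ∀ x ∈ S, ‖T x - p‖ ≤ δ * ‖x - p‖ := fun x hx => by
    simpa only [hfix] using hT x hx p hp
  have hyS : y ∈ S := hy ▸ hSco.sub_smul_add_smul_mem hu (hTS u hu) ht₃.1 ht₃.2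
  have hvS : v ∈ S := hv ▸ hSco.sub_smul_add_smul_mem (hTS u hu) (hTS y hyS) ht₂.1 ht₂.2
  refine ⟨hw ▸ hSco.sub_smul_add_smul_mem hvS (hTS v hvS) ht₁.1 ht₁.2, ?_⟩
  have hy_le : ‖y - p‖ ≤ (1 - t₃ * (1 - δ)) * ‖u - p‖ :=
    hy ▸ norm_sub_smul_add_smul_self_sub_le ht₃.1 ht₃.2 (hTp u hu)
  have hv_le : ‖v - p‖ ≤ δ * (1 - t₂ * t₃ * (1 - δ)) * ‖u - p‖ := by
    have hTy_le : ‖T y - p‖ ≤ δ * ((1 - t₃ * (1 - δ)) * ‖u - p‖) :=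
      (hTp y hyS).trans (mul_le_mul_of_nonneg_left hy_le hδ)
    exact hv ▸ (norm_sub_smul_add_smul_sub_le ht₂.1 ht₂.2 (hTp u hu) hTy_le).trans_eq (by ring)
  have hw_le : ‖w - p‖ ≤ (1 - t₁ * (1 - δ)) * ‖v - p‖ :=
    hw ▸ norm_sub_smul_add_smul_self_sub_le ht₁.1 ht₁.2 (hTp v hvS)
  have hrate₁ : 0 ≤ 1 - t₁ * (1 - δ) := by nlinarith
  calc ‖w - p‖ ≤ (1 - t₁ * (1 - δ)) * (δ * (1 - t₂ * t₃ * (1 - δ)) * ‖u - p‖) :=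
        hw_le.trans (mul_le_mul_of_nonneg_left hv_le hrate₁)
    _ = crRate δ t₁ t₂ t₃ * ‖u - p‖ := by unfold crRate; ring

end

theorem stmt_11_general {B : Type*} [NormedAddCommGroup B] [NormedSpace ℝ B]
    (S : Set B) (hSco : Convex ℝ S)
    (T : B → B) (hTS : ∀ x ∈ S, T x ∈ S)
    (δ : ℝ) (hδ : δ ∈ Set.Ioo (0 : ℝ) 1)
    (hT : ∀ x ∈ S, ∀ y ∈ S, ‖T x - T y‖ ≤ δ * ‖x - y‖)
    (xs : B) (hxs : xs ∈ S) (hfix : T xs = xs)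
    (α1 α2 α3 : ℕ → ℝ) (a1 a2 a3 : ℝ)
    (ha1 : 0 < a1) (ha2 : 0 < a2) (ha3 : 0 < a3)
    (hα1 : ∀ n, a1 ≤ α1 n ∧ α1 n ≤ 1) (hα2 : ∀ n, a2 ≤ α2 n ∧ α2 n ≤ 1)
    (hα3 : ∀ n, a3 ≤ α3 n ∧ α3 n ≤ 1)
    (u v y : ℕ → B) (hu0 : u 0 ∈ S)
    (hu : ∀ n, u (n + 1) = (1 - α1 n) • v n + α1 n • T (v n))
    (hv : ∀ n, v n = (1 - α2 n) • T (u n) + α2 n • T (y n))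
    (hy : ∀ n, y n = (1 - α3 n) • u n + α3 n • T (u n)) :
    ∀ n, ‖u (n + 1) - xs‖ ≤
      ‖u 0 - xs‖ * δ ^ (n + 1) * (1 - a1 * (1 - δ)) ^ (n + 1) *
        (1 - a2 * a3 * (1 - δ)) ^ (n + 1) := by
  have hparam : ∀ {a t : ℝ}, 0 < a → a ≤ t ∧ t ≤ 1 → 0 ≤ t ∧ t ≤ 1 :=
    fun ha ht => ⟨ha.le.trans ht.1, ht.2⟩
  have hstep : ∀ n, u n ∈ S →
      u (n + 1) ∈ S ∧ ‖u (n + 1) - xs‖ ≤ crRate δ (α1 n) (α2 n) (α3 n) * ‖u n - xs‖ :=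
    fun n hun => crStep_mem_and_norm_sub_le hSco hTS hT hδ.1.le hxs hfix (hparam ha1 (hα1 n))
      (hparam ha2 (hα2 n)) (hparam ha3 (hα3 n)) hun (hy n) (hv n) (hu n)
  have hmem : ∀ n, u n ∈ S := fun n => n.rec hu0 fun k huk => (hstep k huk).1
  have hC : 0 ≤ crRate δ a1 a2 a3 :=
    crRate_nonneg hδ ((hα1 0).1.trans (hα1 0).2) ((hα2 0).1.trans (hα2 0).2)
      ⟨ha3.le, (hα3 0).1.trans (hα3 0).2⟩
  intro n
  calc ‖u (n + 1) - xs‖ ≤ crRate δ a1 a2 a3 ^ (n + 1) * ‖u 0 - xs‖ :=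
        le_geom (u := fun k => ‖u k - xs‖) hC (n + 1) fun k _ =>
          (hstep k (hmem k)).2.trans <| mul_le_mul_of_nonneg_right
            (crRate_le_crRate hδ ha2.le ha3.le (hα1 k) (hα2 k) (hα3 k)) (norm_nonneg _)
    _ = _ := by rw [crRate, mul_pow, mul_pow]; ring

theorem stmt_11 {B : Type*} [NormedAddCommGroup B] [NormedSpace ℝ B] [CompleteSpace B]
    (S : Set B) (hS : S.Nonempty) (hScl : IsClosed S) (hSco : Convex ℝ S)
    (T : B → B) (hTS : ∀ x ∈ S, T x ∈ S)
    (δ : ℝ) (hδ : δ ∈ Set.Ioo (0 : ℝ) 1)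
    (hT : ∀ x ∈ S, ∀ y ∈ S, ‖T x - T y‖ ≤ δ * ‖x - y‖)
    (xs : B) (hxs : xs ∈ S) (hfix : T xs = xs)
    (α1 α2 α3 : ℕ → ℝ) (a1 a2 a3 : ℝ)
    (ha1 : 0 < a1) (ha2 : 0 < a2) (ha3 : 0 < a3)
    (hα1 : ∀ n, a1 ≤ α1 n ∧ α1 n ≤ 1) (hα2 : ∀ n, a2 ≤ α2 n ∧ α2 n ≤ 1)
    (hα3 : ∀ n, a3 ≤ α3 n ∧ α3 n ≤ 1)
    (u v y : ℕ → B) (hu0 : u 0 ∈ S)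
    (hu : ∀ n, u (n + 1) = (1 - α1 n) • v n + α1 n • T (v n))
    (hv : ∀ n, v n = (1 - α2 n) • T (u n) + α2 n • T (y n))
    (hy : ∀ n, y n = (1 - α3 n) • u n + α3 n • T (u n)) :
    ∀ n, ‖u (n + 1) - xs‖ ≤
      ‖u 0 - xs‖ * δ ^ (n + 1) * (1 - a1 * (1 - δ)) ^ (n + 1) *
        (1 - a2 * a3 * (1 - δ)) ^ (n + 1) :=
  stmt_11_general S hSco T hTS δ hδ hT xs hxs hfix α1 α2 α3 a1 a2 a3 ha1 ha2 ha3 hα1 hα2 hα3 u v y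
    hu0 hu hv hy
end

section
/- Let T : S → S be a contraction with constant δ ∈ (0,1) and fixed point p, and T̃ an approximate operator of T with ‖Tx - T̃x‖ ≤ ε for all x ∈ S, with fixed point p̃. Let {p_n} and {p̃_n} be the Karahan–Özdemir iterations for T and T̃ with scalar sequences α_n^i ∈ [0,1] satisfying 1/2 ≤ α_n¹ for all n and ∑ α_n¹ = ∞. Then, assuming p̃_n → p̃, one has ‖p - p̃‖ ≤ 5ε / (1 - δ). -/
/-! Since both fixed points lie in `S`, one application of `T` and the approximation bound give
`‖p - p̃‖ ≤ δ ‖p - p̃‖ + ε`, hence `‖p - p̃‖ ≤ ε / (1 - δ) ≤ 5 ε / (1 - δ)`. -/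

open Filter

theorem dist_le_div_of_fixedPoints {X : Type*} [PseudoMetricSpace X] {T T' : X → X}
    {δ ε : ℝ} (hδ : δ < 1) {p p' : X} (hfix : T p = p) (hfix' : T' p' = p')
    (hT : dist (T p) (T p') ≤ δ * dist p p') (happrox : dist (T p') (T' p') ≤ ε) :
    dist p p' ≤ ε / (1 - δ) := by
  have hstep : dist p p' ≤ δ * dist p p' + ε :=
    calc dist p p' = dist (T p) (T' p') := by rw [hfix, hfix']
      _ ≤ dist (T p) (T p') + dist (T p') (T' p') := dist_triangle _ _ _
      _ ≤ δ * dist p p' + ε := add_le_add hT happrox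
  rw [le_div_iff₀ (sub_pos.mpr hδ)]
  linarith

theorem stmt_13_general {B : Type*} [NormedAddCommGroup B]
    (S : Set B)
    (T T' : B → B)
    (δ : ℝ) (hδ : δ ∈ Set.Ioo (0 : ℝ) 1)
    (hT : ∀ x ∈ S, ∀ y ∈ S, ‖T x - T y‖ ≤ δ * ‖x - y‖)
    (ε : ℝ) (hε : 0 < ε) (happrox : ∀ x ∈ S, ‖T x - T' x‖ ≤ ε)
    (pfix p'fix : B) (hpfixS : pfix ∈ S) (hp'fixS : p'fix ∈ S)
    (hfix : T pfix = pfix) (hfix' : T' p'fix = p'fix) :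
    ‖pfix - p'fix‖ ≤ 5 * ε / (1 - δ) := by
  have hdist := dist_le_div_of_fixedPoints hδ.2 hfix hfix'
    (by simpa only [dist_eq_norm] using hT pfix hpfixS p'fix hp'fixS)
    (by simpa only [dist_eq_norm] using happrox p'fix hp'fixS)
  rw [← dist_eq_norm]
  exact hdist.trans (by gcongr <;> linarith [hδ.2])

theorem stmt_13 {B : Type*} [NormedAddCommGroup B] [NormedSpace ℝ B] [CompleteSpace B]
    (S : Set B) (hS : S.Nonempty) (hScl : IsClosed S) (hSco : Convex ℝ S)
    (T T' : B → B) (hTS : ∀ x ∈ S, T x ∈ S) (hT'S : ∀ x ∈ S, T' x ∈ S)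
    (δ : ℝ) (hδ : δ ∈ Set.Ioo (0 : ℝ) 1)
    (hT : ∀ x ∈ S, ∀ y ∈ S, ‖T x - T y‖ ≤ δ * ‖x - y‖)
    (ε : ℝ) (hε : 0 < ε) (happrox : ∀ x ∈ S, ‖T x - T' x‖ ≤ ε)
    (pfix p'fix : B) (hpfixS : pfix ∈ S) (hp'fixS : p'fix ∈ S)
    (hfix : T pfix = pfix) (hfix' : T' p'fix = p'fix)
    (α1 α2 α3 : ℕ → ℝ)
    (hα1 : ∀ n, α1 n ∈ Set.Icc (0 : ℝ) 1) (hα2 : ∀ n, α2 n ∈ Set.Icc (0 : ℝ) 1)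
    (hα3 : ∀ n, α3 n ∈ Set.Icc (0 : ℝ) 1)
    (hhalf : ∀ n, (1 : ℝ) / 2 ≤ α1 n)
    (hdiv : Tendsto (fun n => ∑ k ∈ Finset.range n, α1 k) atTop atTop)
    (p q r p' q' r' : ℕ → B) (hp0 : p 0 ∈ S) (hp'0 : p' 0 ∈ S)
    (hp : ∀ n, p (n + 1) = (1 - α1 n) • T (p n) + α1 n • T (q n))
    (hq : ∀ n, q n = (1 - α2 n) • T (p n) + α2 n • T (r n))
    (hr : ∀ n, r n = (1 - α3 n) • p n + α3 n • T (p n))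
    (hp' : ∀ n, p' (n + 1) = (1 - α1 n) • T' (p' n) + α1 n • T' (q' n))
    (hq' : ∀ n, q' n = (1 - α2 n) • T' (p' n) + α2 n • T' (r' n))
    (hr' : ∀ n, r' n = (1 - α3 n) • p' n + α3 n • T' (p' n))
    (hconv : Tendsto p' atTop (nhds p'fix)) :
    ‖pfix - p'fix‖ ≤ 5 * ε / (1 - δ) :=
  stmt_13_general S T T' δ hδ hT ε hε happrox pfix p'fix hpfixS hp'fixS hfix hfix'
end
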